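/- Let Σ_k and Σ_m be real n×n positive semidefinite matrices with range(Σ_k) = range(Σ_m), and let Φ be a real ℓ×n matrix such that rank(Σ_m^{1/2}·Φᵀ·Φ·Σ_m^{1/2}) = rank(Σ_m). For σ² > 0 define W_m(σ²) := Σ_m·Φᵀ·(σ²·I_ℓ + Φ·Σ_m·Φᵀ)⁻¹. Then lim_{σ²→0⁺} tr(W_m(σ²)·(σ²·I_ℓ + Φ·Σ_k·Φᵀ)·W_m(σ²)ᵀ) = tr(Σ_k). -/

import Mathlib

/-!
Write `Σ_m = S²` with `S = Σ_m^{1/2}` and put `B = S Φᵀ Φ S`. The rank hypothesis says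
`range S = range B`, so `S = B X = Xᵀ B` for some `X`, and the push-through identity turns the
Wiener filter into `W(σ²) = Xᵀ · B (σ² + B)⁻¹ B · X Φᵀ`. Diagonalising `B` shows
`B (σ² + B)⁻¹ B → B`, so `W(σ²) → W₀ := Xᵀ B X Φᵀ`, and `W₀ Φ S = Xᵀ B = S`. As
`range Σ_k ⊆ range S`, the matrix `P = W₀ Φ` fixes `Σ_k`, hence `P Σ_k Pᵀ = Σ_k`, while the noise
term `σ² W Wᵀ` vanishes in the limit.
-/

open Matrix Filter Topology

noncomputable def Matrix.PosSemidef.sqrt {n : Type*} [Fintype n] [DecidableEq n]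
    {A : Matrix n n ℝ} (hA : A.PosSemidef) : Matrix n n ℝ :=
  (hA.1.eigenvectorUnitary : Matrix n n ℝ) * diagonal ((↑) ∘ (√·) ∘ hA.1.eigenvalues : n → ℝ) *
    (star hA.1.eigenvectorUnitary : Matrix n n ℝ)

open scoped MatrixOrder

namespace Matrix

variable {n m p K : Type*} [Fintype n] [Fintype p] [Field K]

lemma exists_mul_eq_of_range_le {R : Type*} [CommSemiring R] {M : Matrix m n R}
    {N : Matrix m p R} (h : LinearMap.range N.mulVecLin ≤ LinearMap.range M.mulVecLin) :
    ∃ X : Matrix n p R, M * X = N := by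
  classical
  choose x hx using fun j => h (LinearMap.mem_range_self N.mulVecLin (Pi.single j 1))
  simp only [mulVecLin_apply, mulVec_single_one] at hx
  refine ⟨(of x)ᵀ, ext fun i j => ?_⟩
  simpa [mul_apply, mulVec, dotProduct] using congrFun (hx j) i

lemma range_mulVecLin_mul_eq_of_rank_eq (A : Matrix m n K) (B : Matrix n p K)
    (h : (A * B).rank = A.rank) :
    LinearMap.range (A * B).mulVecLin = LinearMap.range A.mulVecLin := by
  refine Submodule.eq_of_le_of_finrank_le ?_ h.ge
  rw [mulVecLin_mul]
  exact LinearMap.range_comp_le_range _ _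

lemma mul_inv_smul_one_add_mul_comm [Fintype m] [DecidableEq n] [DecidableEq m] {R : Type*}
    [CommRing R] (r : R) (A : Matrix m n R) (B : Matrix n m R) (hAB : IsUnit (r • 1 + A * B).det)
    (hBA : IsUnit (r • 1 + B * A).det) :
    B * (r • 1 + A * B)⁻¹ = (r • 1 + B * A)⁻¹ * B := by
  have hcomm : (r • 1 + B * A) * B = B * (r • 1 + A * B) := by
    simp only [Matrix.add_mul, Matrix.mul_add, Matrix.smul_mul, Matrix.mul_smul, Matrix.one_mul,
      Matrix.mul_one, Matrix.mul_assoc]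
  calc B * (r • 1 + A * B)⁻¹
      = (r • 1 + B * A)⁻¹ * ((r • 1 + B * A) * B) * (r • 1 + A * B)⁻¹ := by
        rw [← Matrix.mul_assoc, nonsing_inv_mul _ hBA, Matrix.one_mul]
    _ = (r • 1 + B * A)⁻¹ * B := by
        rw [hcomm, Matrix.mul_assoc, Matrix.mul_assoc, mul_nonsing_inv _ hAB, Matrix.mul_one]

lemma IsSymm.mul_mul_transpose_eq_self {R : Type*} [CommSemiring R] {A P : Matrix n n R}
    (hA : A.IsSymm) (hPA : P * A = A) : P * A * Pᵀ = A := by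
  have hAP : A * Pᵀ = A := by
    simpa only [transpose_mul, hA.eq] using congrArg (·ᵀ) hPA
  rw [hPA, hAP]

variable [DecidableEq n]

lemma PosSemidef.sqrt_eq_cfc_sqrt {A : Matrix n n ℝ} (hA : A.PosSemidef) :
    hA.sqrt = CFC.sqrt A := by
  rw [CFC.sqrt_eq_cfc, cfc_nnreal_eq_real _ A hA.nonneg, hA.1.cfc_eq]
  simp [IsHermitian.cfc, PosSemidef.sqrt, Function.comp_def,
    max_eq_left (hA.eigenvalues_nonneg _)]

lemma PosSemidef.isUnit_det_smul_one_add {B : Matrix n n ℝ} (hB : B.PosSemidef) {σ : ℝ}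
    (hσ : 0 < σ) : IsUnit (σ • 1 + B).det :=
  (isUnit_iff_isUnit_det _).mp ((PosDef.one.smul hσ).add_posSemidef hB).isUnit

lemma IsHermitian.tendsto_cfc {X : Type*} {l : Filter X} {A : Matrix n n ℝ} (hA : A.IsHermitian)
    {F : X → ℝ → ℝ} {f : ℝ → ℝ}
    (h : ∀ i, Tendsto (fun x => F x (hA.eigenvalues i)) l (𝓝 (f (hA.eigenvalues i)))) :
    Tendsto (fun x => cfc (F x) A) l (𝓝 (cfc f A)) := by
  simp only [hA.cfc_eq, IsHermitian.cfc, Unitary.conjStarAlgAut_apply]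
  have hconj : Continuous fun D : n → ℝ => (hA.eigenvectorUnitary : Matrix n n ℝ) * diagonal D *
      star (hA.eigenvectorUnitary : Matrix n n ℝ) := by
    fun_prop
  exact (hconj.tendsto _).comp (tendsto_pi_nhds.mpr h)

lemma PosSemidef.inv_smul_one_add_eq_cfc {B : Matrix n n ℝ} (hB : B.PosSemidef) {σ : ℝ}
    (hσ : 0 < σ) : (σ • 1 + B)⁻¹ = cfc (fun t => (σ + t)⁻¹) B := by
  apply inv_eq_left_inv
  have hadd : σ • 1 + B = cfc (fun t => σ + t) B := by
    rw [cfc_const_add σ (fun t => t) B, cfc_id' ℝ B, Algebra.algebraMap_eq_smul_one]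
  rw [hadd, ← cfc_mul _ _ B (B.finite_real_spectrum.continuousOn _), ← cfc_const_one ℝ B]
  refine cfc_congr fun t ht => inv_mul_cancel₀ ?_
  have := spectrum_nonneg_of_nonneg hB.nonneg ht
  positivity

lemma PosSemidef.tendsto_mul_inv_smul_one_add_mul {B : Matrix n n ℝ} (hB : B.PosSemidef) :
    Tendsto (fun σ : ℝ => B * (σ • 1 + B)⁻¹ * B) (𝓝[>] 0) (𝓝 B) := by
  have hfin := B.finite_real_spectrum
  have hcfc : ∀ σ : ℝ, 0 < σ → B * (σ • 1 + B)⁻¹ * B = cfc (fun t => t * (σ + t)⁻¹ * t) B := by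
    intro σ hσ
    rw [hB.inv_smul_one_add_eq_cfc hσ, cfc_mul _ _ B (hfin.continuousOn _) (hfin.continuousOn _),
      cfc_mul _ _ B (hfin.continuousOn _) (hfin.continuousOn _), cfc_id' ℝ B]
  refine Tendsto.congr' (eventually_nhdsWithin_of_forall fun σ hσ => (hcfc σ hσ).symm) ?_
  conv => enter [3, 1]; rw [← cfc_id' ℝ B]
  refine hB.1.tendsto_cfc fun i => ?_
  set d := hB.1.eigenvalues i
  rcases (hB.eigenvalues_nonneg i).eq_or_lt with hd | hd
  · simp [d, ← hd]
  · have hcont : ContinuousAt (fun σ : ℝ => d * (σ + d)⁻¹ * d) 0 := by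
      fun_prop (disch := positivity)
    simpa [hd.ne'] using hcont.tendsto.mono_left nhdsWithin_le_nhds

end Matrix

noncomputable def wienerFilter {n l : Type*} [Fintype n] [Fintype l] [DecidableEq l]
    (C : Matrix n n ℝ) (Φ : Matrix l n ℝ) (σ2 : ℝ) : Matrix n l ℝ :=
  C * Φᵀ * (σ2 • 1 + Φ * C * Φᵀ)⁻¹

theorem exists_tendsto_wienerFilter_mul_self {n l : Type*} [Fintype n] [DecidableEq n] [Fintype l]
    [DecidableEq l] {S : Matrix n n ℝ} (hS : S.IsSymm) (Φ : Matrix l n ℝ)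
    (hrange : LinearMap.range S.mulVecLin ≤ LinearMap.range (S * Φᵀ * Φ * S).mulVecLin) :
    ∃ W₀, Tendsto (wienerFilter (S * S) Φ) (𝓝[>] 0) (𝓝 W₀) ∧ W₀ * Φ * S = S := by
  set B := S * Φᵀ * Φ * S with hBdef
  have hB : B.PosSemidef := by
    simpa [hBdef, hS.eq, Matrix.mul_assoc] using posSemidef_conjTranspose_mul_self (Φ * S)
  obtain ⟨X, hBX⟩ := exists_mul_eq_of_range_le hrange
  have hBsymm : B.IsSymm := by
    simp only [IsSymm, hBdef, transpose_mul, transpose_transpose, hS.eq, Matrix.mul_assoc]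
  have hXB : Xᵀ * B = S := by
    simpa only [transpose_mul, hBsymm.eq, hS.eq] using congrArg transpose hBX
  refine ⟨Xᵀ * B * X * Φᵀ, ?_, ?_⟩
  · have hW : ∀ σ : ℝ, 0 < σ →
        wienerFilter (S * S) Φ σ = Xᵀ * (B * (σ • 1 + B)⁻¹ * B) * X * Φᵀ := by
      intro σ hσ
      have hdet : IsUnit (σ • 1 + Φ * S * (S * Φᵀ)).det := by
        refine PosSemidef.isUnit_det_smul_one_add ?_ hσ
        simpa [hS.eq, Matrix.mul_assoc] using posSemidef_self_mul_conjTranspose (Φ * S)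
      have hpush := mul_inv_smul_one_add_mul_comm σ (Φ * S) (S * Φᵀ) hdet
        (by simpa [hBdef, Matrix.mul_assoc] using hB.isUnit_det_smul_one_add hσ)
      calc wienerFilter (S * S) Φ σ = S * ((S * Φᵀ) * (σ • 1 + Φ * S * (S * Φᵀ))⁻¹) := by
            simp only [wienerFilter, Matrix.mul_assoc]
        _ = Xᵀ * B * (σ • 1 + B)⁻¹ * (B * X) * Φᵀ := by
            rw [hpush, hXB, hBX]
            simp only [hBdef, Matrix.mul_assoc]
        _ = _ := by simp only [Matrix.mul_assoc]
    have hcont : Continuous fun M : Matrix n n ℝ => Xᵀ * M * X * Φᵀ := by fun_prop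
    refine Tendsto.congr' (eventually_nhdsWithin_of_forall fun σ hσ => (hW σ hσ).symm) ?_
    exact (hcont.tendsto B).comp hB.tendsto_mul_inv_smul_one_add_mul
  · calc Xᵀ * B * X * Φᵀ * Φ * S = Xᵀ * (B * X) * Φᵀ * Φ * S := by rw [Matrix.mul_assoc Xᵀ]
      _ = Xᵀ * B := by rw [hBX, hBdef]; simp only [Matrix.mul_assoc]
      _ = S := hXB

lemma tendsto_trace_mul_smul_one_add_mul_transpose {n l : Type*} [Fintype n] [Fintype l]
    [DecidableEq l] {F : Filter ℝ} (hF : F ≤ 𝓝 0) {W : ℝ → Matrix n l ℝ} {W₀ : Matrix n l ℝ}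
    (hW : Tendsto W F (𝓝 W₀)) (K : Matrix l l ℝ) :
    Tendsto (fun σ2 => (W σ2 * (σ2 • 1 + K) * (W σ2)ᵀ).trace) F (𝓝 (W₀ * K * W₀ᵀ).trace) := by
  have hcont : Continuous fun q : ℝ × Matrix n l ℝ => (q.2 * (q.1 • 1 + K) * q.2ᵀ).trace := by
    fun_prop
  simpa only [zero_smul, zero_add, Function.comp_def, id] using
    (hcont.tendsto (0, W₀)).comp ((tendsto_id.mono_left hF).prodMk_nhds hW)

/-- If range(Σ_k) = range(Σ_m) and rank(Σ_m^{1/2}·Φᵀ·Φ·Σ_m^{1/2}) = rank(Σ_m),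
then, with W_m(σ²) = Σ_m·Φᵀ·(σ²·I + Φ·Σ_m·Φᵀ)⁻¹,
tr(W_m(σ²)·(σ²·I + Φ·Σ_k·Φᵀ)·W_m(σ²)ᵀ) → tr(Σ_k) as σ² → 0⁺. -/
theorem stmt_15 {n l : ℕ} (Sk Sm : Matrix (Fin n) (Fin n) ℝ)
    (hSk : Sk.PosSemidef) (hSm : Sm.PosSemidef)
    (hrange : LinearMap.range Sk.mulVecLin = LinearMap.range Sm.mulVecLin)
    (Φ : Matrix (Fin l) (Fin n) ℝ)
    (hrank : (hSm.sqrt * Φᵀ * Φ * hSm.sqrt).rank = Sm.rank)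
    (W : ℝ → Matrix (Fin n) (Fin l) ℝ)
    (hW : ∀ σ2 : ℝ, W σ2 = Sm * Φᵀ * (σ2 • (1 : Matrix (Fin l) (Fin l) ℝ) + Φ * Sm * Φᵀ)⁻¹) :
    Tendsto (fun σ2 : ℝ =>
        (W σ2 * (σ2 • (1 : Matrix (Fin l) (Fin l) ℝ) + Φ * Sk * Φᵀ) * (W σ2)ᵀ).trace)
      (nhdsWithin 0 (Set.Ioi 0)) (nhds Sk.trace) := by
  set S := CFC.sqrt Sm
  have hS : S.IsSymm := by
    simpa [IsSymm] using (CFC.sqrt_nonneg Sm).posSemidef.1.eq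
  have hSS : S * S = Sm := CFC.sqrt_mul_sqrt_self Sm hSm.nonneg
  have hrankSm : Sm.rank = S.rank := by rw [← hSS, ← rank_transpose_mul_self S, hS.eq]
  have hrankS : (S * (Φᵀ * Φ * S)).rank = S.rank := by
    rw [hSm.sqrt_eq_cfc_sqrt, hrankSm] at hrank
    simpa only [Matrix.mul_assoc] using hrank
  obtain ⟨W₀, hlim, hW₀⟩ := exists_tendsto_wienerFilter_mul_self hS Φ
    (by simpa only [Matrix.mul_assoc] using (range_mulVecLin_mul_eq_of_rank_eq _ _ hrankS).ge)
  obtain ⟨Y, hY⟩ : ∃ Y, S * Y = Sk := by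
    refine exists_mul_eq_of_range_le ?_
    rw [hrange, ← hSS, mulVecLin_mul]
    exact LinearMap.range_comp_le_range _ _
  have hvalue : W₀ * (Φ * Sk * Φᵀ) * W₀ᵀ = Sk := by
    have hSk' : Sk.IsSymm := by simpa [IsSymm] using hSk.1.eq
    simpa only [transpose_mul, Matrix.mul_assoc] using
      hSk'.mul_mul_transpose_eq_self (P := W₀ * Φ) (by rw [← hY, ← Matrix.mul_assoc, hW₀])
  have hWeq : W = wienerFilter (S * S) Φ := funext fun σ2 => by rw [hW, hSS, wienerFilter]
  have htr := tendsto_trace_mul_smul_one_add_mul_transpose nhdsWithin_le_nhds hlim (Φ * Sk * Φᵀ)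
  rwa [hvalue, ← hWeq] at htr
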